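/- Let n ≥ 2, c > 0, and let L_u be the n×n Laplacian of the uniformly weighted line graph. For every integer k with 1 ≤ k ≤ n, the vector v_k ∈ ℝⁿ with entries v_k(j) = sin(2jkπ/(2n+1)) for j = 1, …, n satisfies (L_u + c·e₁e₁ᵀ + 2c·e_ne_nᵀ) v_k = 2c(1 − cos(2kπ/(2n+1))) v_k. Hence the DST-5 basis vectors are eigenvectors of the generalized graph Laplacian of the line graph with a self-loop of weight c at the first vertex and a self-loop of weight 2c at the last vertex. -/

import Mathlib

/-!
Write the DST-5 vector as `j ↦ u (j + 1)` with `u m = sin (m θ)`, `θ = 2kπ/(2n+1)`. Away from the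
boundary the matrix acts as the second difference `c (2 u(m) - u(m-1) - u(m+1))`, and
`sin (x - θ) + sin (x + θ) = 2 cos θ sin x` makes `u` an eigenfunction of it. The self-loops are
exactly what makes the boundary rows fit the same pattern: the loop `c` at the first vertex
because `u 0 = 0`, the loop `2c` at the last vertex because `(n + 1) θ = 2kπ - n θ` gives
`u (n + 1) = -u n`.
-/

open Matrix Real

/-- The combinatorial Laplacian of the uniformly weighted line graph on `n` vertices with
edge weight `c`. -/
def lineLaplacian (n : ℕ) (c : ℝ) : Matrix (Fin n) (Fin n) ℝ :=
  Matrix.of fun i j =>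
    if i = j then (if i.val = 0 ∨ i.val = n - 1 then c else 2 * c)
    else if i.val + 1 = j.val ∨ j.val + 1 = i.val then -c else 0

open Finset in
lemma sum_range_tridiagonal_row (n a : ℕ) (ha : a < n) (d e : ℝ) (w : ℕ → ℝ) :
    ∑ m ∈ range n,
      ((if m = a then d else 0) + (if m = a + 1 then e else 0) + (if m + 1 = a then e else 0)) * w m
    = d * w a + (if a + 1 < n then e * w (a + 1) else 0)
        + (if 0 < a then e * w (a - 1) else 0) := by
  have hpred : ∀ m, (m + 1 = a) ↔ (0 < a ∧ m = a - 1) := fun m => by omega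
  simp only [add_mul, sum_add_distrib, ite_mul, zero_mul, hpred, ite_and]
  rw [sum_ite_eq', sum_ite_eq', sum_ite_irrel, sum_ite_eq']
  have : a - 1 < n := by omega
  simp [mem_range, ha, this]

/-- `L_u + c e₁e₁ᵀ + 2c eₙeₙᵀ`, the generalized Laplacian whose GBT is the DST-5. -/
def lineLaplacianDST5 (n : ℕ) (c : ℝ) (hn : 0 < n) : Matrix (Fin n) (Fin n) ℝ :=
  lineLaplacian n c + single (⟨0, hn⟩ : Fin n) ⟨0, hn⟩ c
    + single (⟨n - 1, Nat.sub_one_lt_of_lt hn⟩ : Fin n) ⟨n - 1, Nat.sub_one_lt_of_lt hn⟩ (2 * c)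

lemma lineLaplacianDST5_apply {n : ℕ} (hn : 2 ≤ n) (c : ℝ) (i j : Fin n) :
    lineLaplacianDST5 n c (Nat.zero_lt_of_lt hn) i j
      = (if (j : ℕ) = i then (if (i : ℕ) = n - 1 then 3 * c else 2 * c) else 0)
        + (if (j : ℕ) = i + 1 then -c else 0) + (if (j : ℕ) + 1 = i then -c else 0) := by
  simp only [lineLaplacianDST5, Matrix.add_apply, lineLaplacian, single, of_apply, Fin.ext_iff]
  split_ifs <;> first | ring1 | omega

lemma lineLaplacianDST5_mulVec_apply {n : ℕ} (hn : 2 ≤ n) (c : ℝ) (u : ℕ → ℝ)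
    (hu₀ : u 0 = 0) (hu : u (n + 1) = -u n) (i : Fin n) :
    (lineLaplacianDST5 n c (Nat.zero_lt_of_lt hn) *ᵥ fun j => u (j + 1)) i
      = c * (2 * u (i + 1) - u i - u (i + 2)) := by
  obtain ⟨a, ha⟩ := i
  have hrow := sum_range_tridiagonal_row n a ha (if a = n - 1 then 3 * c else 2 * c) (-c)
    (fun m => u (m + 1))
  simp only [mulVec, dotProduct, lineLaplacianDST5_apply hn]
  rw [← Fin.sum_univ_eq_sum_range] at hrow
  rw [hrow]
  have hleft : (if 0 < a then -c * u (a - 1 + 1) else 0) = -c * u a := by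
    rcases a with _ | a
    · simp [hu₀]
    · simp
  have hright : (if a = n - 1 then 3 * c else 2 * c) * u (a + 1)
      + (if a + 1 < n then -c * u (a + 1 + 1) else 0) = 2 * c * u (a + 1) - c * u (a + 2) := by
    by_cases hlast : a = n - 1
    · obtain rfl : n = a + 1 := by omega
      simp only [add_tsub_cancel_right, ↓reduceIte, lt_self_iff_false, add_zero, hu, mul_neg,
        sub_neg_eq_add]
      ring
    · simp only [hlast, ↓reduceIte, show a + 1 < n by omega, neg_mul]
      ring
  linear_combination hleft + hright

lemma two_mul_sin_sub_sin_sub_sin (x θ : ℝ) :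
    2 * sin x - sin (x - θ) - sin (x + θ) = 2 * (1 - cos θ) * sin x := by
  rw [sin_sub, sin_add]
  ring

lemma sin_succ_mul_eq_neg_sin_mul {n k : ℕ} {θ : ℝ} (hθ : (2 * n + 1) * θ = k * (2 * π)) :
    sin ((n + 1) * θ) = -sin (n * θ) := by
  rw [← sin_nat_mul_two_pi_sub (n * θ) k]
  congr 1
  linear_combination hθ

/-- DST-5 basis vectors are eigenvectors of the line graph Laplacian with a self-loop of weight `c` at the first vertex and `2c` at the last vertex. For `1 ≤ k ≤ n` the given vector is an eigenvector
with the stated eigenvalue. -/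
theorem dst5_eigenvectors (n : ℕ) (hn : 2 ≤ n) (c : ℝ) (k : ℕ) :
    (lineLaplacian n c + Matrix.single (⟨0, by omega⟩ : Fin n) ⟨0, by omega⟩ c + Matrix.single (⟨n - 1, by omega⟩ : Fin n) ⟨n - 1, by omega⟩ (2 * c)) *ᵥ
        (fun j : Fin n => Real.sin (2 * ((j : ℝ) + 1) * (k : ℝ) * Real.pi / (2 * n + 1))) =
      (2 * c * (1 - Real.cos (2 * (k : ℝ) * Real.pi / (2 * n + 1)))) •
        (fun j : Fin n => Real.sin (2 * ((j : ℝ) + 1) * (k : ℝ) * Real.pi / (2 * n + 1))) := by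
  set θ : ℝ := 2 * k * π / (2 * n + 1)
  have hθ : (2 * n + 1) * θ = k * (2 * π) := by
    simp only [θ]
    field_simp
  have hv : (fun j : Fin n => sin (2 * ((j : ℝ) + 1) * k * π / (2 * n + 1)))
      = fun j : Fin n => sin (((j + 1 : ℕ) : ℝ) * θ) := by
    funext j
    congr 1
    push_cast
    ring
  rw [hv]
  change lineLaplacianDST5 n c (Nat.zero_lt_of_lt hn) *ᵥ _ = _
  funext i
  rw [lineLaplacianDST5_mulVec_apply hn c (fun m => sin (m * θ)) (by simp)
    (by push_cast; exact sin_succ_mul_eq_neg_sin_mul hθ)]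
  simp only [Pi.smul_apply, smul_eq_mul]
  push_cast
  have hdiff := two_mul_sin_sub_sin_sub_sin ((i + 1) * θ) θ
  rw [show ((i : ℝ) + 1) * θ - θ = i * θ by ring, show ((i : ℝ) + 1) * θ + θ = (i + 2) * θ by ring]
    at hdiff
  linear_combination c * hdiff
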